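/- arXiv:1301.6433 — 3 statements merged into one kernel-verified Lean document; each statement's English description precedes it below -/
import Mathlib

section
/- Let m, k ≥ 1, let d_1 ≥ d_2 ≥ ... ≥ d_k ≥ 0 be real delays, and let w_1, ..., w_k be natural numbers, not all zero, with m* = max_j w_j. If A is an m × k binary matrix such that the number of 1-entries in column j equals w_j for every j ∈ {1,...,k}, then D_T(A) ≥ D_T(A*), where A* is the m* × k matrix with a*_{i,j} = 1 iff i ≤ w_j. -/
/-- The delay of row `i` of a binary matrix `A`: the maximum of `d j` over the
columns `j` where `A i j = 1`, with the empty maximum taken to be `0`. -/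
def rowDelay {m k : ℕ} (d : Fin k → ℝ) (A : Fin m → Fin k → Bool) (i : Fin m) : ℝ :=
  (Finset.univ.filter (fun j => A i j = true)).fold max 0 d

/-- The total delay of a binary matrix `A`: the sum of the row delays. -/
def totalDelay {m k : ℕ} (d : Fin k → ℝ) (A : Fin m → Fin k → Bool) : ℝ :=
  ∑ i, rowDelay d A i

/-- The weight of column `j` of a binary matrix `A`: the number of its 1-entries. -/
def colWeight {m k : ℕ} (A : Fin m → Fin k → Bool) (j : Fin k) : ℕ :=
  (Finset.univ.filter (fun i => A i j = true)).card

/-!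
Layer-cake decomposition: with `d_k = 0`, write `d_j = ∑_{l ≥ j} (d_l - d_{l+1})`. Since `d` is
antitone and nonnegative, the delay of a row is `d` at its first one, i.e. the sum of the
nonnegative gaps `d_l - d_{l+1}` over those `l` for which the row has a one in a column `≤ l`.
Hence the total delay is `∑_l (d_l - d_{l+1}) · N_l`, where `N_l` counts the rows with a one in a
column `≤ l`. Column `j ≤ l` alone forces `N_l ≥ w_j`, while for `A* = canonicalMatrix w m*`
the count `N_l` is exactly `max_{j ≤ l} w_j`.
-/

open Finset

def extendByZero {k : ℕ} (d : Fin k → ℝ) (n : ℕ) : ℝ :=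
  if h : n < k then d ⟨n, h⟩ else 0

def delayGap {k : ℕ} (d : Fin k → ℝ) (l : ℕ) : ℝ :=
  extendByZero d l - extendByZero d (l + 1)

def coveredRows {m k : ℕ} (A : Fin m → Fin k → Bool) (l : ℕ) : ℕ :=
  #{i | ∃ j, A i j = true ∧ j.val ≤ l}

def canonicalMatrix {k : ℕ} (w : Fin k → ℕ) (m : ℕ) : Fin m → Fin k → Bool :=
  fun i j => decide (i.val < w j)

section Delays

variable {k : ℕ} {d : Fin k → ℝ}

lemma antitone_extendByZero (hd0 : ∀ j, 0 ≤ d j) (hd : Antitone d) :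
    Antitone (extendByZero d) := by
  intro a b hab
  unfold extendByZero
  split_ifs
  · exact hd (Fin.mk_le_mk.mpr hab)
  · omega
  · exact hd0 _
  · rfl

lemma delayGap_nonneg (hd0 : ∀ j, 0 ≤ d j) (hd : Antitone d) (l : ℕ) : 0 ≤ delayGap d l :=
  sub_nonneg.mpr (antitone_extendByZero hd0 hd l.le_succ)

lemma sum_Ico_delayGap (j : Fin k) : ∑ l ∈ Ico j.val k, delayGap d l = d j := by
  have htop : extendByZero d k = 0 := by simp [extendByZero]
  have hj : extendByZero d j = d j := by simp [extendByZero]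
  unfold delayGap
  rw [sum_Ico_eq_sub _ j.isLt.le, sum_range_sub', sum_range_sub', htop, hj]
  ring

lemma fold_max_eq_sum_delayGap (hd0 : ∀ j, 0 ≤ d j) (hd : Antitone d) (S : Finset (Fin k)) :
    S.fold max 0 d = ∑ l ∈ range k with ∃ j ∈ S, j.val ≤ l, delayGap d l := by
  rcases S.eq_empty_or_nonempty with rfl | hS
  · simp
  set j₀ := S.min' hS
  have hmax : S.fold max 0 d = d j₀ :=
    le_antisymm ((fold_max_le _).mpr ⟨hd0 _, fun j hj => hd (S.min'_le j hj)⟩)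
      ((le_fold_max _).mpr (Or.inr ⟨j₀, S.min'_mem hS, le_rfl⟩))
  have hrange : {l ∈ range k | ∃ j ∈ S, j.val ≤ l} = Ico j₀.val k := by
    ext l
    simp only [mem_filter, mem_range, mem_Ico]
    constructor
    · rintro ⟨hl, j, hj, hjl⟩
      exact ⟨(Fin.le_def.mp (S.min'_le j hj)).trans hjl, hl⟩
    · rintro ⟨hjl, hl⟩
      exact ⟨hl, j₀, S.min'_mem hS, hjl⟩
  rw [hmax, hrange, sum_Ico_delayGap]

theorem totalDelay_eq_sum_delayGap_mul (hd0 : ∀ j, 0 ≤ d j) (hd : Antitone d) {m : ℕ}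
    (A : Fin m → Fin k → Bool) :
    totalDelay d A = ∑ l ∈ range k, delayGap d l * coveredRows A l := by
  simp only [totalDelay, rowDelay, fold_max_eq_sum_delayGap hd0 hd, sum_filter]
  rw [sum_comm]
  refine sum_congr rfl fun l _ => ?_
  simp [coveredRows, sum_ite, mul_comm]

end Delays

section CoveredRows

variable {m k : ℕ}

lemma colWeight_le_coveredRows (A : Fin m → Fin k → Bool) {j : Fin k} {l : ℕ}
    (hjl : j.val ≤ l) :
    colWeight A j ≤ coveredRows A l :=
  card_le_card fun i hi => by
    simp only [mem_filter, mem_univ, true_and] at hi ⊢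
    exact ⟨j, hi, hjl⟩

lemma coveredRows_canonicalMatrix {w : Fin k → ℕ} (hw : ∀ j, w j ≤ m) (l : ℕ) :
    coveredRows (canonicalMatrix w m) l = ({j : Fin k | j.val ≤ l} : Finset (Fin k)).sup w := by
  calc coveredRows (canonicalMatrix w m) l
      = #{i : Fin m | i.val < ({j : Fin k | j.val ≤ l} : Finset (Fin k)).sup w} := by
        unfold coveredRows
        congr 1
        ext i
        simp [canonicalMatrix, Finset.lt_sup_iff, and_comm]
    _ = _ := by rw [Fin.card_filter_val_lt, min_eq_right (Finset.sup_le fun j _ => hw j)]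

end CoveredRows

theorem totalDelay_canonicalMatrix_le {m n k : ℕ} {d : Fin k → ℝ} (hd0 : ∀ j, 0 ≤ d j)
    (hd : Antitone d) {w : Fin k → ℕ} (hw : ∀ j, w j ≤ n) (A : Fin m → Fin k → Bool)
    (hA : ∀ j, w j ≤ colWeight A j) :
    totalDelay d (canonicalMatrix w n) ≤ totalDelay d A := by
  rw [totalDelay_eq_sum_delayGap_mul hd0 hd, totalDelay_eq_sum_delayGap_mul hd0 hd]
  refine sum_le_sum fun l _ => mul_le_mul_of_nonneg_left ?_ (delayGap_nonneg hd0 hd l)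
  rw [coveredRows_canonicalMatrix hw]
  exact_mod_cast Finset.sup_le fun j hj =>
    (hA j).trans (colWeight_le_coveredRows A (by simpa using hj))

theorem stmt0_general (m k : ℕ)
    (d : Fin k → ℝ) (hd0 : ∀ j, 0 ≤ d j) (hdanti : Antitone d)
    (w : Fin k → ℕ)
    (A : Fin m → Fin k → Bool)
    (hA : ∀ j, colWeight A j = w j) :
    totalDelay d (fun (i : Fin (Finset.univ.sup w)) (j : Fin k) => decide (i.val < w j))
      ≤ totalDelay d A :=
  totalDelay_canonicalMatrix_le hd0 hdanti (fun j => Finset.le_sup (mem_univ j)) A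
    fun j => (hA j).ge

/-- if every column of the binary matrix `A` has exactly `w j` ones,
then the total delay of `A` is at least that of the canonical matrix `A*`
(with `m* = max_j w_j` rows, whose column `j` consists of `w j` ones on top). -/
theorem stmt0 (m k : ℕ) (hm : 1 ≤ m) (hk : 1 ≤ k)
    (d : Fin k → ℝ) (hd0 : ∀ j, 0 ≤ d j) (hdanti : Antitone d)
    (w : Fin k → ℕ) (hw : ∃ j, w j ≠ 0)
    (A : Fin m → Fin k → Bool)
    (hA : ∀ j, colWeight A j = w j) :
    totalDelay d (fun (i : Fin (Finset.univ.sup w)) (j : Fin k) => decide (i.val < w j))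
      ≤ totalDelay d A :=
  stmt0_general m k d hd0 hdanti w A hA
end

section
/- Let m, k ≥ 1 and let d_1 ≥ d_2 ≥ ... ≥ d_k ≥ 0 be real delays. Let A be an m × k binary matrix, and let i, i' ∈ {1,...,m} and j ∈ {1,...,k} satisfy a_{i,j} = 0, a_{i',j} = 1, and dl_A(i) ≥ d_j. Let A' be the matrix obtained from A by setting a'_{i,j} = 1 and a'_{i',j} = 0 and leaving all other entries unchanged. Then D_T(A') ≤ D_T(A), and every column of A' has the same number of 1-entries as the corresponding column of A. -/
/-!
Since row `i` already has delay at least `d j`, every 1-entry `(r, x)` of `A'` satisfies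
`d x ≤ dl_A(r)`, so no row delay increases. Column `j` of `A'` is column `j` of `A` with
rows `i` and `i'` swapped, and the other columns are unchanged.
-/

section Delay

variable {m k : ℕ} (d : Fin k → ℝ) (A B : Fin m → Fin k → Bool)

theorem rowDelay_le_iff {r : Fin m} {c : ℝ} :
    rowDelay d A r ≤ c ↔ 0 ≤ c ∧ ∀ x, A r x = true → d x ≤ c := by
  simp [rowDelay, Finset.fold_max_le]

theorem rowDelay_nonneg (r : Fin m) : 0 ≤ rowDelay d A r :=
  (Finset.le_fold_max _).2 (Or.inl le_rfl)

theorem le_rowDelay {r : Fin m} {x : Fin k} (h : A r x = true) : d x ≤ rowDelay d A r :=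
  (Finset.le_fold_max _).2 (Or.inr ⟨x, by simpa using h, le_rfl⟩)

theorem totalDelay_le_of_forall_le_rowDelay
    (h : ∀ r x, B r x = true → d x ≤ rowDelay d A r) : totalDelay d B ≤ totalDelay d A :=
  Finset.sum_le_sum fun r _ => (rowDelay_le_iff d B).2 ⟨rowDelay_nonneg d A r, h r⟩

end Delay

theorem colWeight_eq_of_perm {m k : ℕ} {A B : Fin m → Fin k → Bool} {j : Fin k}
    (σ : Equiv.Perm (Fin m)) (h : ∀ x, B x j = A (σ x) j) : colWeight B j = colWeight A j :=
  Finset.card_equiv σ fun x => by simp [h]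

theorem stmt8_general (m k : ℕ)
    (d : Fin k → ℝ)
    (A : Fin m → Fin k → Bool) (i i' : Fin m) (j : Fin k)
    (h0 : A i j = false) (h1 : A i' j = true) (hdl : d j ≤ rowDelay d A i)
    (A' : Fin m → Fin k → Bool)
    (hA' : ∀ i'' j'', A' i'' j'' =
      if i'' = i ∧ j'' = j then true
      else if i'' = i' ∧ j'' = j then false
      else A i'' j'') :
    totalDelay d A' ≤ totalDelay d A ∧ ∀ j'', colWeight A' j'' = colWeight A j'' := by
  have hii' : i ≠ i' := by
    rintro rfl
    simp [h0] at h1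
  refine ⟨totalDelay_le_of_forall_le_rowDelay d A A' fun r x hrx => ?_, fun x => ?_⟩
  · rw [hA'] at hrx
    split_ifs at hrx with hij
    · obtain ⟨rfl, rfl⟩ := hij
      exact hdl
    · exact le_rowDelay d A hrx
  · by_cases hx : x = j
    · subst hx
      refine colWeight_eq_of_perm (Equiv.swap i i') fun r => ?_
      rw [hA']
      by_cases hri : r = i
      · simp [hri, h1]
      by_cases hri' : r = i'
      · simp [hri', hii'.symm, h0]
      · simp [hri, hri', Equiv.swap_apply_of_ne_of_ne hri hri']
    · exact colWeight_eq_of_perm (Equiv.refl _) fun r => by simp [hA', hx]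

/-- moving a 1-entry of column `j` from row `i'` to row `i`, where the
current delay of row `i` is already at least `d j`, does not increase the total
delay and preserves all column weights. -/
theorem stmt8 (m k : ℕ) (hm : 1 ≤ m) (hk : 1 ≤ k)
    (d : Fin k → ℝ) (hd0 : ∀ j, 0 ≤ d j) (hdanti : Antitone d)
    (A : Fin m → Fin k → Bool) (i i' : Fin m) (j : Fin k)
    (h0 : A i j = false) (h1 : A i' j = true) (hdl : d j ≤ rowDelay d A i)
    (A' : Fin m → Fin k → Bool)
    (hA' : ∀ i'' j'', A' i'' j'' =
      if i'' = i ∧ j'' = j then true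
      else if i'' = i' ∧ j'' = j then false
      else A i'' j'') :
    totalDelay d A' ≤ totalDelay d A ∧ ∀ j'', colWeight A' j'' = colWeight A j'' :=
  stmt8_general m k d A i i' j h0 h1 hdl A' hA'
end

section
/- Let F_q be a finite field with q ≥ k, let n, m, k ≥ 1, let H_1, ..., H_k ⊆ {1,...,n}, and let A = (a_{h,j}) be an m × k binary matrix such that for every j ∈ {1,...,k}, the number of 1-entries in column j of A is at least n − |H_j|. Then there exist vectors p_1, ..., p_m ∈ F_q^n such that for every j ∈ {1,...,k}, the set {e_i : i ∈ H_j} ∪ {p_h : a_{h,j} = 1} spans F_q^n, where e_1,...,e_n is the standard basis of F_q^n. -/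
/-!
Choose the broadcast vectors one at a time, tracking for each client the subspace spanned by its
side information and the vectors assigned to it so far. The next vector is picked outside the
subspaces of all clients it is assigned to that do not yet have the whole space; this is possible
because at most `k ≤ q` proper subspaces never cover `F^n`. Each such subspace then gains a
dimension, so a client starting from dimension `|H j|` and receiving at least `n - |H j|` vectors
ends with all of `F^n`.
-/

open Module Submodule

section Avoidance

variable {F V : Type*} [Field F] [Finite F] [AddCommGroup V] [Module F V] [Module.Finite F V]

theorem Submodule.natCard_mul_natCard_le_of_ne_top {W : Submodule F V} (hW : W ≠ ⊤) :
    Nat.card W * Nat.card F ≤ Nat.card V := by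
  rw [natCard_eq_pow_finrank (K := F), natCard_eq_pow_finrank (K := F) (V := V), ← pow_succ]
  exact Nat.pow_le_pow_right Nat.card_pos (finrank_lt hW)

/-- The punctured subspaces have at most `q (|V|/q - 1) = |V| - q < |V| - 1` elements in total. -/
theorem Submodule.exists_forall_notMem_of_card_le {ι : Type*} (s : Finset ι)
    (W : ι → Submodule F V) (hW : ∀ j ∈ s, W j ≠ ⊤) (hs : s.card ≤ Nat.card F) :
    ∃ v : V, ∀ j ∈ s, v ∉ W j := by
  classical
  have := Module.finite_of_finite F (M := V)
  have := Fintype.ofFinite V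
  by_contra! hcover
  obtain ⟨j₀, hj₀, -⟩ := hcover 0
  set q := Nat.card F with hq_def
  set c := Fintype.card V with hc_def
  set P : ι → Finset V := fun j => (W j : Set V).toFinset.erase 0
  have hP : ∀ j ∈ s, (P j).card * q ≤ c - q := by
    intro j hj
    have h := natCard_mul_natCard_le_of_ne_top (hW j hj)
    rw [Nat.card_eq_fintype_card (α := V), ← SetLike.coe_sort_coe, Nat.card_coe_set_eq,
      Set.ncard_eq_toFinset_card', ← hq_def, ← hc_def] at h
    rw [Finset.card_erase_of_mem (by simp), Nat.sub_mul, one_mul]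
    omega
  have hnonzero : Finset.univ.erase 0 ⊆ s.biUnion P := by
    intro v hv
    obtain ⟨j, hj, hvj⟩ := hcover v
    exact Finset.mem_biUnion.2 ⟨j, hj, by simpa [P, (Finset.mem_erase.1 hv).1] using hvj⟩
  have hcount : (c - 1) * q ≤ (c - q) * q :=
    calc (c - 1) * q ≤ (s.biUnion P).card * q := by
          gcongr
          simpa using Finset.card_le_card hnonzero
      _ ≤ (∑ j ∈ s, (P j).card) * q := by gcongr; exact Finset.card_biUnion_le
      _ ≤ ∑ _j ∈ s, (c - q) := by rw [Finset.sum_mul]; exact Finset.sum_le_sum hP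
      _ ≤ (c - q) * q := by rw [Finset.sum_const, smul_eq_mul, mul_comm]; gcongr
  have hq : 1 < q := Finite.one_lt_card
  have hqc : q ≤ c := by
    rw [hc_def, ← Nat.card_eq_fintype_card]
    exact (Nat.le_mul_of_pos_left q Nat.card_pos).trans
      (natCard_mul_natCard_le_of_ne_top (hW j₀ hj₀))
  have := Nat.le_of_mul_le_mul_right hcount (by omega)
  omega

end Avoidance

theorem colWeight_eq_colWeight_succ_add {m k : ℕ} (A : Fin (m + 1) → Fin k → Bool)
    (j : Fin k) :
    colWeight A j = colWeight (fun h => A h.succ) j + if A 0 j = true then 1 else 0 := by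
  simp only [colWeight, Finset.card_filter, Fin.sum_univ_succ, add_comm]

section Assignment

variable {F V : Type*} [Field F] [Finite F] [AddCommGroup V] [Module F V] [Module.Finite F V]

theorem exists_sup_span_image_eq_top {k : ℕ} (hk : k ≤ Nat.card F) {m : ℕ}
    (A : Fin m → Fin k → Bool) (W : Fin k → Submodule F V)
    (hW : ∀ j, finrank F V ≤ finrank F (W j) + colWeight A j) :
    ∃ p : Fin m → V, ∀ j, W j ⊔ span F (p '' {h | A h j = true}) = ⊤ := by
  induction m generalizing W with
  | zero =>
    refine ⟨Fin.elim0, fun j => eq_top_of_finrank_eq ?_⟩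
    have := hW j
    simp only [colWeight, Finset.univ_eq_empty, Finset.filter_empty, Finset.card_empty] at this
    exact le_antisymm (finrank_le _) (this.trans (finrank_mono le_sup_left))
  | succ m ih =>
    classical
    obtain ⟨v, hv⟩ := exists_forall_notMem_of_card_le
      (Finset.univ.filter fun j => A 0 j = true ∧ W j ≠ ⊤) W (by simp +contextual)
      ((Finset.card_filter_le _ _).trans (by simpa using hk))
    obtain ⟨W', hW'_def⟩ : ∃ W' : Fin k → Submodule F V,
        ∀ j, W' j = if A 0 j = true then W j ⊔ span F {v} else W j := ⟨_, fun _ => rfl⟩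
    have hW' : ∀ j, finrank F V ≤ finrank F (W' j) + colWeight (fun h => A h.succ) j := by
      intro j
      have := hW j
      rw [colWeight_eq_colWeight_succ_add] at this
      by_cases h0 : A 0 j = true
      · rw [if_pos h0] at this
        rw [hW'_def, if_pos h0]
        rcases eq_or_ne (W j) ⊤ with htop | htop
        · rw [htop, top_sup_eq, finrank_top]
          omega
        · rw [finrank_sup_span_singleton (hv j (by simp [h0, htop]))]
          omega
      · rw [if_neg h0] at this
        rw [hW'_def, if_neg h0]
        omega
    obtain ⟨p, hp⟩ := ih (fun h => A h.succ) W' hW'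
    refine ⟨Fin.cons v p, fun j => top_unique ((hp j).symm.le.trans (sup_le ?_ ?_))⟩
    · by_cases h0 : A 0 j = true
      · rw [hW'_def, if_pos h0]
        exact sup_le_sup_left (span_mono (Set.singleton_subset_iff.2
          (show v ∈ Fin.cons v p '' {h | A h j = true} from ⟨0, h0, rfl⟩))) _
      · rw [hW'_def, if_neg h0]
        exact le_sup_left
    · refine le_sup_of_le_right (span_mono ?_)
      rintro _ ⟨h, hh, rfl⟩
      exact ⟨h.succ, hh, Fin.cons_succ _ _ _⟩

end Assignment

theorem finrank_span_image_single_one (F : Type*) {ι : Type*} [Field F] [DecidableEq ι]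
    (s : Finset ι) :
    finrank F (span F ((fun i => (Pi.single i 1 : ι → F)) '' (s : Set ι))) = s.card := by
  rw [Set.image_eq_range]
  exact (finrank_span_eq_card ((Pi.linearIndependent_single_one ι F).comp _
    Subtype.val_injective)).trans (Fintype.card_coe s)

theorem stmt12_general (F : Type*) [Field F] [Fintype F] (n m k : ℕ)
    (hq : k ≤ Fintype.card F)
    (H : Fin k → Finset (Fin n)) (A : Fin m → Fin k → Bool)
    (hA : ∀ j : Fin k, n - (H j).card ≤ colWeight A j) :
    ∃ p : Fin m → (Fin n → F), ∀ j : Fin k,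
      Submodule.span F
        ((fun i : Fin n => (Pi.single i 1 : Fin n → F)) '' (H j : Set (Fin n))
          ∪ p '' {h : Fin m | A h j = true}) = ⊤ := by
  have hdim : ∀ j, finrank F (Fin n → F) ≤
      finrank F (span F ((fun i => (Pi.single i 1 : Fin n → F)) '' (H j : Set (Fin n))))
        + colWeight A j := by
    intro j
    rw [finrank_fin_fun, finrank_span_image_single_one]
    have := hA j
    have := card_finset_fin_le (H j)
    omega
  obtain ⟨p, hp⟩ :=
    exists_sup_span_image_eq_top (Nat.card_eq_fintype_card (α := F) ▸ hq) A _ hdim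
  exact ⟨p, fun j => by rw [span_union, hp j]⟩

/-- sufficiency in the feasibility criterion, over a field of size
`q ≥ k`: if column `j` of the assignment matrix has at least `n - |H j|` ones for
every client `j`, then there exist broadcast coefficient vectors
`p 1, …, p m ∈ F^n` such that for every `j` the unit vectors indexed by `H j`
together with the designated broadcast vectors span `F^n`. -/
theorem stmt12 (F : Type*) [Field F] [Fintype F] (n m k : ℕ)
    (hn : 1 ≤ n) (hm : 1 ≤ m) (hk : 1 ≤ k) (hq : k ≤ Fintype.card F)
    (H : Fin k → Finset (Fin n)) (A : Fin m → Fin k → Bool)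
    (hA : ∀ j : Fin k, n - (H j).card ≤ colWeight A j) :
    ∃ p : Fin m → (Fin n → F), ∀ j : Fin k,
      Submodule.span F
        ((fun i : Fin n => (Pi.single i 1 : Fin n → F)) '' (H j : Set (Fin n))
          ∪ p '' {h : Fin m | A h j = true}) = ⊤ :=
  stmt12_general F n m k hq H A hA
end
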